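/- arXiv:1910.04445 — 4 statements merged into one kernel-verified Lean document; each statement's English description precedes it below -/
import Mathlib

section
/- Let α > 0 and μ > −1, and define θ(n) = [Γ(1/(μ+1)+α+1)·Γ(n/(μ+1)+1)] / [n·Γ(n/(μ+1)+α+1)·Γ(1/(μ+1)+1)] for n ≥ 1. Then the sequence θ(n) is non-increasing: for all n ≥ 1, θ(n+1) ≤ θ(n). -/
/-!
Since `log ∘ Γ` is convex on `(0, ∞)`, its increments `log Γ(x + ε) - log Γ(x)` grow with `x`,
i.e. `x ↦ Γ(x) / Γ(x + α)` is antitone. Writing `xₙ = n / (μ + 1) + 1`, the sequence is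
`θ(n) = C · Γ(xₙ) / Γ(xₙ + α) / n` with a positive constant `C`, a product of two
positive antitone factors.
-/

open Real Set

theorem ConvexOn.map_add_add_le_add_map_add {𝕜 β : Type*} [Field 𝕜] [LinearOrder 𝕜]
    [IsStrictOrderedRing 𝕜] [AddCommGroup β] [PartialOrder β] [IsOrderedAddMonoid β]
    [Module 𝕜 β] {s : Set 𝕜} {f : 𝕜 → β} (hf : ConvexOn 𝕜 s f) {a b ε : 𝕜}
    (ha : a ∈ s) (hbε : b + ε ∈ s) (hab : a ≤ b) (hε : 0 ≤ ε) :
    f (a + ε) + f b ≤ f a + f (b + ε) := by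
  rcases (add_nonneg (sub_nonneg.2 hab) hε).eq_or_lt with hd | hd
  · obtain ⟨rfl, rfl⟩ : b = a ∧ ε = 0 := by constructor <;> linarith
    rw [add_zero, add_comm]
  -- both `a + ε` and `b` are convex combinations of the endpoints `a` and `b + ε`
  set t := (b - a) / (b - a + ε)
  have ht : 0 ≤ t := div_nonneg (sub_nonneg.2 hab) hd.le
  have ht' : 0 ≤ 1 - t := by
    rw [sub_nonneg, div_le_one hd]; linarith
  have h₁ : t • a + (1 - t) • (b + ε) = a + ε := by
    simp only [smul_eq_mul, t]; field_simp; ring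
  have h₂ : (1 - t) • a + t • (b + ε) = b := by
    simp only [smul_eq_mul, t]; field_simp; ring
  have hf₁ := hf.2 ha hbε ht ht' (by ring)
  have hf₂ := hf.2 ha hbε ht' ht (by ring)
  rw [h₁] at hf₁
  rw [h₂] at hf₂
  calc f (a + ε) + f b
      ≤ (t • f a + (1 - t) • f (b + ε)) + ((1 - t) • f a + t • f (b + ε)) := add_le_add hf₁ hf₂
    _ = f a + f (b + ε) := by module

theorem Real.Gamma_add_mul_Gamma_le {a b ε : ℝ} (ha : 0 < a) (hab : a ≤ b) (hε : 0 ≤ ε) :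
    Gamma (a + ε) * Gamma b ≤ Gamma a * Gamma (b + ε) := by
  have hb : 0 < b := ha.trans_le hab
  rw [← log_le_log_iff (by positivity) (by positivity),
    log_mul (Gamma_pos_of_pos (by positivity)).ne' (Gamma_pos_of_pos hb).ne',
    log_mul (Gamma_pos_of_pos ha).ne' (Gamma_pos_of_pos (by positivity)).ne']
  exact convexOn_log_Gamma.map_add_add_le_add_map_add ha (by positivity : 0 < b + ε) hab hε

theorem Real.antitoneOn_Gamma_div_Gamma_add {ε : ℝ} (hε : 0 ≤ ε) :
    AntitoneOn (fun x ↦ Gamma x / Gamma (x + ε)) (Ioi 0) := by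
  intro a (ha : 0 < a) b _ hab
  have hb : 0 < b := ha.trans_le hab
  rw [div_le_div_iff₀ (Gamma_pos_of_pos (by positivity)) (Gamma_pos_of_pos (by positivity)),
    mul_comm]
  exact Real.Gamma_add_mul_Gamma_le ha hab hε

theorem theta_antitone (α μ : ℝ) (hα : 0 < α) (hμ : -1 < μ)
    (θ : ℕ → ℝ)
    (hθ : ∀ n : ℕ, θ n =
      (Real.Gamma (1 / (μ + 1) + α + 1) * Real.Gamma ((n : ℝ) / (μ + 1) + 1)) /
        ((n : ℝ) * Real.Gamma ((n : ℝ) / (μ + 1) + α + 1) * Real.Gamma (1 / (μ + 1) + 1))) :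
    ∀ n : ℕ, 1 ≤ n → θ (n + 1) ≤ θ n := by
  intro n hn
  have hμ₁ : 0 < μ + 1 := by linarith
  set C := Gamma (1 / (μ + 1) + α + 1) / Gamma (1 / (μ + 1) + 1)
  set g := fun x : ℝ ↦ Gamma x / Gamma (x + α)
  have hθg : ∀ m : ℕ, θ m = C * g ((m : ℝ) / (μ + 1) + 1) / m := fun m ↦ by
    simp only [hθ, C, g, add_right_comm _ (1 : ℝ) α]
    ring
  have hstep : g ((n + 1 : ℕ) / (μ + 1) + 1) ≤ g ((n : ℝ) / (μ + 1) + 1) :=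
    Real.antitoneOn_Gamma_div_Gamma_add hα.le (mem_Ioi.2 (by positivity))
      (mem_Ioi.2 (by positivity)) (by gcongr; simp)
  rw [hθg, hθg]
  gcongr C * ?_ / ?_
  exact_mod_cast n.le_succ
end

section
/- Let α < 1 and β < 1. Suppose p and q are analytic on the open unit disk 𝔻 with p(0) = q(0) = 1, Re(p(z)) > α and Re(q(z)) > β for all z ∈ 𝔻. Then the Hadamard product (p∗q)(z) = ∑_{n≥0} p_n q_n z^n (where p(z) = ∑ p_n z^n, q(z) = ∑ q_n z^n) satisfies Re((p∗q)(z)) > 1 − 2(1−α)(1−β) for all z ∈ 𝔻. -/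
/-!
Put `f = p - α` and `g = q - β`: then `Re f, Re g > 0` and the constant coefficients are
`a₀ = 1 - α`, `b₀ = 1 - β`. Write `z = r w` with `‖z‖ < r < 1`. By orthogonality of the
`e^{ikθ}` on `[0, 2π]`,
`∫ (f(r e^{iθ}) + conj f(r e^{iθ})) g(w e^{-iθ}) dθ = 2π (∑ aₙ bₙ zⁿ + conj a₀ b₀)`,
and the integrand is `2 Re f(r e^{iθ}) · g(w e^{-iθ})`, which has positive real part.
Undoing the normalization turns `Re (∑ aₙ bₙ zⁿ) + (1 - α)(1 - β) > 0` into the claim.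
-/

open Complex Metric

open scoped Real ComplexConjugate

theorem summable_norm_mul_pow_of_norm_lt {𝕜 : Type*} [NormedField 𝕜] {c : ℕ → 𝕜} {x y : 𝕜}
    (hy : Summable fun n => c n * y ^ n) (hxy : ‖x‖ < ‖y‖) :
    Summable fun n => ‖c n * x ^ n‖ := by
  obtain ⟨C, hC⟩ := hy.tendsto_atTop_zero.norm.bddAbove_range
  have hy0 : 0 < ‖y‖ := (norm_nonneg x).trans_lt hxy
  refine .of_nonneg_of_le (fun _ => norm_nonneg _) (fun n => ?_)
    ((summable_geometric_of_lt_one (by positivity) ((div_lt_one hy0).2 hxy)).mul_left C)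
  calc ‖c n * x ^ n‖ = ‖c n * y ^ n‖ * (‖x‖ / ‖y‖) ^ n := by
        rw [norm_mul, norm_mul, norm_pow, norm_pow, div_pow]
        field_simp
    _ ≤ C * (‖x‖ / ‖y‖) ^ n := by gcongr; exact hC ⟨n, rfl⟩

theorem norm_exp_int_mul_I (k : ℤ) (θ : ℝ) : ‖exp (k * θ * I)‖ = 1 :=
  mod_cast norm_exp_ofReal_mul_I (k * θ)

theorem integral_exp_int_mul_I (k : ℤ) :
    ∫ θ in (0 : ℝ)..2 * π, exp (k * θ * I) = if k = 0 then (2 * π : ℂ) else 0 := by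
  split_ifs with hk
  · simp [hk]
  have hkI : (k * I : ℂ) ≠ 0 := by simp [hk]
  simp_rw [mul_right_comm _ _ I]
  rw [integral_exp_mul_complex hkI, ofReal_zero, mul_zero, exp_zero]
  have : (k : ℂ) * I * ↑(2 * π) = k * (2 * π * I) := by push_cast; ring
  rw [this, exp_int_mul_two_pi_mul_I, sub_self, zero_div]

section TrigonometricSeries

variable {ι κ : Type*}

theorem summable_norm_mul_exp {c : ι → ℂ} (hc : Summable fun i => ‖c i‖) (k : ι → ℤ) (θ : ℝ) :
    Summable fun i => ‖c i * exp (k i * θ * I)‖ := by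
  simpa only [norm_mul, norm_exp_int_mul_I, mul_one] using hc

theorem continuous_tsum_mul_exp {c : ι → ℂ} (hc : Summable fun i => ‖c i‖) (k : ι → ℤ) :
    Continuous fun θ : ℝ => ∑' i, c i * exp (k i * θ * I) :=
  continuous_tsum (fun i => by fun_prop) hc fun i θ => by rw [norm_mul, norm_exp_int_mul_I, mul_one]

theorem integral_tsum_mul_exp [Countable ι] {c : ι → ℂ} (hc : Summable fun i => ‖c i‖) (k : ι → ℤ) :
    ∫ θ in (0 : ℝ)..2 * π, ∑' i, c i * exp (k i * θ * I)
      = 2 * π * ∑' i, if k i = 0 then c i else 0 := by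
  let F : ι → C(ℝ, ℂ) := fun i => ⟨fun θ => c i * exp (k i * θ * I), by fun_prop⟩
  have hF : Summable fun i => ‖(F i).restrict
      (⟨Set.uIcc 0 (2 * π), isCompact_uIcc⟩ : TopologicalSpace.Compacts ℝ)‖ :=
    .of_nonneg_of_le (fun _ => norm_nonneg _) (fun i => (ContinuousMap.norm_le _ (norm_nonneg _)).2
      fun θ => by simp [F, norm_exp_int_mul_I]) hc
  rw [← tsum_mul_left]
  refine (intervalIntegral.tsum_intervalIntegral_eq_of_summable_norm hF).symm.trans ?_
  congr 1 with i
  simp only [F, ContinuousMap.coe_mk, intervalIntegral.integral_const_mul, integral_exp_int_mul_I]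
  split_ifs <;> ring

theorem integral_tsum_mul_exp_mul_tsum_mul_exp [Countable ι] [Countable κ] {a : ι → ℂ}
    {b : κ → ℂ} (ha : Summable fun i => ‖a i‖) (hb : Summable fun j => ‖b j‖)
    (k : ι → ℤ) (l : κ → ℤ) :
    ∫ θ in (0 : ℝ)..2 * π, (∑' i, a i * exp (k i * θ * I)) * ∑' j, b j * exp (l j * θ * I)
      = 2 * π * ∑' x : ι × κ, if k x.1 + l x.2 = 0 then a x.1 * b x.2 else 0 := by
  have hprod : ∀ θ : ℝ, (∑' i, a i * exp (k i * θ * I)) * (∑' j, b j * exp (l j * θ * I))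
      = ∑' x : ι × κ, a x.1 * b x.2 * exp ((k x.1 + l x.2 : ℤ) * θ * I) := fun θ => by
    rw [tsum_mul_tsum_of_summable_norm (summable_norm_mul_exp ha k θ)
      (summable_norm_mul_exp hb l θ)]
    congr 1 with x
    rw [Int.cast_add, add_mul, add_mul, exp_add]
    ring
  simp_rw [hprod]
  exact integral_tsum_mul_exp (ha.mul_norm hb) _

end TrigonometricSeries

theorem integral_tsum_mul_exp_mul_tsum_mul_exp_neg {a b : ℕ → ℂ} (ha : Summable fun n => ‖a n‖)
    (hb : Summable fun n => ‖b n‖) :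
    ∫ θ in (0 : ℝ)..2 * π, (∑' n, a n * exp (n * θ * I)) * ∑' n, b n * exp (-n * θ * I)
      = 2 * π * ∑' n, a n * b n := by
  have h := integral_tsum_mul_exp_mul_tsum_mul_exp ha hb (fun n => (n : ℤ)) (fun n => -(n : ℤ))
  push_cast at h
  rw [h]
  congr 1
  have hdiag : Function.Injective fun n : ℕ => (n, n) := fun m n h => congrArg Prod.fst h
  rw [← hdiag.tsum_eq]
  · simp
  · rintro ⟨m, n⟩ hmn
    have hmn : (m : ℤ) + -n = 0 := by_contra fun h => hmn (if_neg h)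
    exact ⟨m, Prod.ext rfl (show m = n by omega)⟩

theorem integral_tsum_mul_exp_neg_mul_tsum_mul_exp_neg {a b : ℕ → ℂ}
    (ha : Summable fun n => ‖a n‖) (hb : Summable fun n => ‖b n‖) :
    ∫ θ in (0 : ℝ)..2 * π, (∑' n, a n * exp (-n * θ * I)) * ∑' n, b n * exp (-n * θ * I)
      = 2 * π * (a 0 * b 0) := by
  have h := integral_tsum_mul_exp_mul_tsum_mul_exp ha hb (fun n => -(n : ℤ)) (fun n => -(n : ℤ))
  push_cast at h
  rw [h, tsum_eq_single (0, 0)]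
  · simp
  · rintro ⟨m, n⟩ hmn
    have : ¬(-(m : ℤ) + -n = 0) := fun h =>
      hmn (Prod.ext (show m = 0 by omega) (show n = 0 by omega))
    simp only [if_neg this]

theorem re_tsum_mul_add_conj_mul_pos {a b : ℕ → ℂ} (ha : Summable fun n => ‖a n‖)
    (hb : Summable fun n => ‖b n‖)
    (ha_re : ∀ θ : ℝ, 0 < (∑' n, a n * exp (n * θ * I)).re)
    (hb_re : ∀ θ : ℝ, 0 < (∑' n, b n * exp (-n * θ * I)).re) :
    0 < (∑' n, a n * b n + conj (a 0) * b 0).re := by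
  set A := fun θ : ℝ => ∑' n, a n * exp (n * θ * I)
  set B := fun θ : ℝ => ∑' n, b n * exp (-n * θ * I)
  have hA : Continuous A := by simpa using continuous_tsum_mul_exp ha (fun n => (n : ℤ))
  have hB : Continuous B := by
    have := continuous_tsum_mul_exp hb (fun n => -(n : ℤ))
    push_cast at this
    exact this
  have hAB : Continuous fun θ => (A θ + conj (A θ)) * B θ :=
    (hA.add (continuous_conj.comp hA)).mul hB
  have hconjA : ∀ θ : ℝ, conj (A θ) = ∑' n, conj (a n) * exp (-n * θ * I) := fun θ => by
    rw [conj_tsum]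
    congr 1 with n
    rw [map_mul, ← exp_conj]
    simp
  have hint : ∫ θ in (0 : ℝ)..2 * π, (A θ + conj (A θ)) * B θ
      = 2 * π * (∑' n, a n * b n + conj (a 0) * b 0) := by
    simp_rw [add_mul]
    rw [intervalIntegral.integral_add (f := fun θ => A θ * B θ) (g := fun θ => conj (A θ) * B θ)
      ((hA.mul hB).intervalIntegrable _ _)
      (((continuous_conj.comp hA).mul hB).intervalIntegrable _ _)]
    simp_rw [hconjA]
    rw [integral_tsum_mul_exp_mul_tsum_mul_exp_neg ha hb,
      integral_tsum_mul_exp_neg_mul_tsum_mul_exp_neg (by simpa using ha) hb, mul_add]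
  have hpos : 0 < ∫ θ in (0 : ℝ)..2 * π, ((A θ + conj (A θ)) * B θ).re := by
    refine intervalIntegral.intervalIntegral_pos_of_pos_on ?_ (fun θ _ => ?_) Real.two_pi_pos
    · exact (continuous_re.comp hAB).intervalIntegrable _ _
    · rw [add_conj, re_ofReal_mul]
      exact mul_pos (mul_pos two_pos (ha_re θ)) (hb_re θ)
  have hre := intervalIntegral.intervalIntegral_re
    (hAB.intervalIntegrable (μ := MeasureTheory.volume) 0 (2 * π))
  simp only [RCLike.re_to_complex] at hre
  rw [hre, hint, ← ofReal_ofNat, ← ofReal_mul, re_ofReal_mul] at hpos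
  exact pos_of_mul_pos_right hpos Real.two_pi_pos.le

theorem summable_norm_mul_pow_of_mem_ball {c : ℕ → ℂ} {R : ℝ}
    (hc : ∀ z ∈ ball (0 : ℂ) R, Summable fun n => c n * z ^ n) {x : ℂ} (hx : x ∈ ball (0 : ℂ) R) :
    Summable fun n => ‖c n * x ^ n‖ := by
  rw [mem_ball_zero_iff] at hx
  have hy : ‖(((‖x‖ + R) / 2 : ℝ) : ℂ)‖ = (‖x‖ + R) / 2 := by
    rw [norm_real, Real.norm_of_nonneg (by linarith [norm_nonneg x])]
  refine summable_norm_mul_pow_of_norm_lt (hc _ ?_) (by rw [hy]; linarith)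
  rw [mem_ball_zero_iff, hy]
  linarith

theorem mul_exp_mem_ball {x : ℂ} {R : ℝ} (hx : x ∈ ball (0 : ℂ) R) (θ : ℝ) :
    x * exp (θ * I) ∈ ball (0 : ℂ) R := by
  rwa [mem_ball_zero_iff, norm_mul, norm_exp_ofReal_mul_I, mul_one, ← mem_ball_zero_iff]

theorem exists_hasSum_mul_mul_pow_re_add_conj_mul_pos {f g : ℂ → ℂ} {a b : ℕ → ℂ}
    (hf : ∀ z ∈ ball (0 : ℂ) 1, HasSum (fun n => a n * z ^ n) (f z))
    (hg : ∀ z ∈ ball (0 : ℂ) 1, HasSum (fun n => b n * z ^ n) (g z))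
    (hf_re : ∀ z ∈ ball (0 : ℂ) 1, 0 < (f z).re) (hg_re : ∀ z ∈ ball (0 : ℂ) 1, 0 < (g z).re)
    {z : ℂ} (hz : z ∈ ball (0 : ℂ) 1) :
    ∃ s, HasSum (fun n => a n * b n * z ^ n) s ∧ 0 < (s + conj (a 0) * b 0).re := by
  rw [mem_ball_zero_iff] at hz
  obtain ⟨r, hzr, hr1⟩ := exists_between hz
  have hr : 0 < r := (norm_nonneg z).trans_lt hzr
  have hr_ball : (r : ℂ) ∈ ball (0 : ℂ) 1 := by
    rwa [mem_ball_zero_iff, norm_real, Real.norm_of_nonneg hr.le]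
  set w : ℂ := z / r
  have hw : w ∈ ball (0 : ℂ) 1 := by
    rw [mem_ball_zero_iff, norm_div, norm_real, Real.norm_of_nonneg hr.le, div_lt_one hr]
    exact hzr
  have hrw : ∀ n : ℕ, (r : ℂ) ^ n * w ^ n = z ^ n := fun n => by
    rw [← mul_pow, mul_div_cancel₀ _ (ofReal_ne_zero.2 hr.ne')]
  have hr_mem := mul_exp_mem_ball hr_ball
  have hw_mem : ∀ θ : ℝ, w * exp (-θ * I) ∈ ball (0 : ℂ) 1 := fun θ => by
    simpa using mul_exp_mem_ball hw (-θ)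
  have hfA : ∀ θ : ℝ, HasSum (fun n => a n * r ^ n * exp (n * θ * I)) (f (r * exp (θ * I))) :=
    fun θ => by
      convert hf _ (hr_mem θ) using 2 with n
      rw [mul_pow, ← exp_nat_mul, mul_assoc, mul_assoc]
  have hgB : ∀ θ : ℝ, HasSum (fun n => b n * w ^ n * exp (-n * θ * I)) (g (w * exp (-θ * I))) :=
    fun θ => by
      convert hg _ (hw_mem θ) using 2 with n
      rw [mul_pow, ← exp_nat_mul, mul_assoc, neg_mul, neg_mul, neg_mul, mul_neg, mul_assoc]
  have ha : Summable fun n => ‖a n * r ^ n‖ :=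
    summable_norm_mul_pow_of_mem_ball (fun z hz => (hf z hz).summable) hr_ball
  have hb : Summable fun n => ‖b n * w ^ n‖ :=
    summable_norm_mul_pow_of_mem_ball (fun z hz => (hg z hz).summable) hw
  have key := re_tsum_mul_add_conj_mul_pos ha hb
    (fun θ => (hfA θ).tsum_eq ▸ hf_re _ (hr_mem θ)) (fun θ => (hgB θ).tsum_eq ▸ hg_re _ (hw_mem θ))
  have hab : ∀ n, a n * r ^ n * (b n * w ^ n) = a n * b n * z ^ n := fun n => by
    rw [← hrw]; ring
  simp only [hab, pow_zero, mul_one] at key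
  refine ⟨_, Summable.hasSum ?_, key⟩
  simpa only [Function.comp_def, hab] using (summable_mul_of_summable_norm ha hb).comp_injective
    (fun m n h => congrArg Prod.fst h : Function.Injective fun n : ℕ => (n, n))

theorem HasSum.sub_ite_zero_mul_pow {c : ℕ → ℂ} {z y : ℂ} (h : HasSum (fun n => c n * z ^ n) y)
    (x : ℂ) : HasSum (fun n => (c n - if n = 0 then x else 0) * z ^ n) (y - x) := by
  refine (h.sub (hasSum_ite_eq 0 x)).congr_fun fun n => ?_
  split_ifs with hn <;> simp [hn]

theorem stankiewicz_convolution_general (α β : ℝ)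
    (p q : ℂ → ℂ) (pc qc : ℕ → ℂ)
    (hpc0 : pc 0 = 1) (hqc0 : qc 0 = 1)
    (hp : ∀ z ∈ ball (0 : ℂ) 1, HasSum (fun n : ℕ => pc n * z ^ n) (p z))
    (hq : ∀ z ∈ ball (0 : ℂ) 1, HasSum (fun n : ℕ => qc n * z ^ n) (q z))
    (hpre : ∀ z ∈ ball (0 : ℂ) 1, α < (p z).re)
    (hqre : ∀ z ∈ ball (0 : ℂ) 1, β < (q z).re) :
    ∀ z ∈ ball (0 : ℂ) 1, ∃ s : ℂ,
      HasSum (fun n : ℕ => pc n * qc n * z ^ n) s ∧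
      1 - 2 * (1 - α) * (1 - β) < s.re := by
  intro z hz
  obtain ⟨s, hs, hs_re⟩ := exists_hasSum_mul_mul_pow_re_add_conj_mul_pos
    (fun z hz => (hp z hz).sub_ite_zero_mul_pow α) (fun z hz => (hq z hz).sub_ite_zero_mul_pow β)
    (fun z hz => by simpa using hpre z hz) (fun z hz => by simpa using hqre z hz) hz
  have h0 : conj (pc 0 - if 0 = 0 then (α : ℂ) else 0) * (qc 0 - if 0 = 0 then (β : ℂ) else 0)
      = ((1 - α) * (1 - β) : ℝ) := by simp [hpc0, hqc0]
  rw [h0, add_re, ofReal_re] at hs_re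
  refine ⟨s + ((1 - (1 - α) * (1 - β) : ℝ) : ℂ), ?_, ?_⟩
  · convert hs.add (hasSum_ite_eq 0 ((1 - (1 - α) * (1 - β) : ℝ) : ℂ)) using 2 with n
    cases n <;> simp [hpc0, hqc0]
  · rw [add_re, ofReal_re]
    linarith

theorem stankiewicz_convolution (α β : ℝ) (hα : α < 1) (hβ : β < 1)
    (p q : ℂ → ℂ) (pc qc : ℕ → ℂ)
    (hpc0 : pc 0 = 1) (hqc0 : qc 0 = 1)
    (hp : ∀ z ∈ ball (0 : ℂ) 1, HasSum (fun n : ℕ => pc n * z ^ n) (p z))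
    (hq : ∀ z ∈ ball (0 : ℂ) 1, HasSum (fun n : ℕ => qc n * z ^ n) (q z))
    (hpre : ∀ z ∈ ball (0 : ℂ) 1, α < (p z).re)
    (hqre : ∀ z ∈ ball (0 : ℂ) 1, β < (q z).re) :
    ∀ z ∈ ball (0 : ℂ) 1, ∃ s : ℂ,
      HasSum (fun n : ℕ => pc n * qc n * z ^ n) s ∧
      1 - 2 * (1 - α) * (1 - β) < s.re :=
  stankiewicz_convolution_general α β p q pc qc hpc0 hqc0 hp hq hpre hqre
end

section
/- Let α > 1 and μ > −1, and let f(z) = z + ∑_{n≥2} a_n z^n be analytic on the open unit disk 𝔻 with Re(f'(z)) > 0 on 𝔻. Define Ω f(z) = z + ∑_{n≥2} [Γ(1/(μ+1)+α+1)·Γ(n/(μ+1)+1)] / [Γ(n/(μ+1)+α+1)·Γ(1/(μ+1)+1)] · a_n z^n. Then Re((Ω f)'(z)) > 0 for all z ∈ 𝔻. -/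
open Complex Metric MeasureTheory Set intervalIntegral

lemma myBeta {a b : ℝ} (ha : 0 < a) (hb : 0 < b) :
    ∫ v in (0:ℝ)..1, v ^ (a-1) * (1-v) ^ (b-1) = Real.Gamma a * Real.Gamma b / Real.Gamma (a+b) := by
  have key := Complex.Gamma_mul_Gamma_eq_betaIntegral (s := (a:ℂ)) (t := (b:ℂ))
    (by simpa using ha) (by simpa using hb)
  have h2 : Complex.betaIntegral a b
      = ((∫ v in (0:ℝ)..1, v ^ (a-1) * (1-v) ^ (b-1) : ℝ) : ℂ) := by
    rw [← intervalIntegral.integral_ofReal]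
    apply intervalIntegral.integral_congr
    intro x hx
    rw [Set.uIcc_of_le zero_le_one] at hx
    have e1 : ((x ^ (a-1) : ℝ) : ℂ) = (x:ℂ) ^ ((a:ℂ)-1) := by
      rw [Complex.ofReal_cpow hx.1]; push_cast; ring_nf
    have e2 : (((1-x) ^ (b-1) : ℝ) : ℂ) = (1-(x:ℂ)) ^ ((b:ℂ)-1) := by
      rw [Complex.ofReal_cpow (by linarith [hx.2])]; push_cast; ring_nf
    simp only [Complex.ofReal_mul, e1, e2]
  rw [h2, Complex.Gamma_ofReal, Complex.Gamma_ofReal] at key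
  have e3 : (a:ℂ) + (b:ℂ) = ((a+b:ℝ):ℂ) := by push_cast; ring
  rw [e3, Complex.Gamma_ofReal] at key
  have key2 : Real.Gamma a * Real.Gamma b
      = Real.Gamma (a+b) * ∫ v in (0:ℝ)..1, v ^ (a-1) * (1-v) ^ (b-1) := by
    exact_mod_cast key
  have hne : Real.Gamma (a+b) ≠ 0 := (Real.Gamma_pos_of_pos (by linarith)).ne'
  rw [eq_div_iff hne]
  rw [key2]; ring

lemma mySubst {p : ℝ} (hp : 0 < p) (φ : ℝ → ℝ) :
    ∫ x in Set.Ioc (0:ℝ) 1, p * x^(p-1) * φ (x^p) = ∫ y in Set.Ioc (0:ℝ) 1, φ y := by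
  have key := MeasureTheory.integral_comp_rpow_Ioi ((Set.Ioc (0:ℝ) 1).indicator φ) hp.ne'
  have hsub : Set.Ioi (0:ℝ) ∩ Set.Ioc 0 1 = Set.Ioc (0:ℝ) 1 :=
    Set.inter_eq_right.2 (fun x hx => hx.1)
  rw [MeasureTheory.setIntegral_indicator measurableSet_Ioc, hsub] at key
  rw [← key]
  have step : ∫ x in Set.Ioi (0:ℝ), (|p| * x ^ (p-1)) • (Set.Ioc (0:ℝ) 1).indicator φ (x^p)
      = ∫ x in Set.Ioi (0:ℝ), (Set.Ioc (0:ℝ) 1).indicator (fun x => p * x^(p-1) * φ (x^p)) x := by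
    apply MeasureTheory.setIntegral_congr_fun measurableSet_Ioi
    intro x hx
    simp only [smul_eq_mul]
    have hx0 : (0:ℝ) < x := hx
    by_cases hx1 : x ≤ 1
    · have hmem : x ∈ Set.Ioc (0:ℝ) 1 := ⟨hx0, hx1⟩
      have hmem' : x ^ p ∈ Set.Ioc (0:ℝ) 1 :=
        ⟨Real.rpow_pos_of_pos hx0 p, Real.rpow_le_one hx0.le hx1 hp.le⟩
      rw [Set.indicator_of_mem hmem, Set.indicator_of_mem hmem', _root_.abs_of_pos hp]
    · push_neg at hx1
      have hmem : x ∉ Set.Ioc (0:ℝ) 1 := fun h => absurd h.2 (not_le.2 hx1)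
      have hmem' : x ^ p ∉ Set.Ioc (0:ℝ) 1 := by
        intro h
        have : 1 < x ^ p := (Real.one_lt_rpow_iff_of_pos hx0).2 (Or.inl ⟨hx1, hp⟩)
        exact absurd h.2 (not_le.2 this)
      rw [Set.indicator_of_notMem hmem, Set.indicator_of_notMem hmem', mul_zero]
  rw [step, MeasureTheory.setIntegral_indicator measurableSet_Ioc, hsub]

lemma mySumNQ {q : ℝ} (h0 : 0 ≤ q) (h1 : q < 1) :
    Summable (fun n : ℕ => (n:ℝ) * q^(n-1)) := by
  have hq : ‖q‖ < 1 := by rwa [Real.norm_eq_abs, _root_.abs_of_nonneg h0]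
  have h := (summable_norm_pow_mul_geometric_of_norm_lt_one 1 hq).of_norm
  have h2 := h.add (summable_geometric_of_lt_one h0 h1)
  rw [← summable_nat_add_iff 1]
  convert h2 using 2 with n
  push_cast
  ring

lemma myDeriv (b : ℕ → ℂ) {C r ρ : ℝ} (hC : 0 ≤ C) (hr : 0 < r) (hrρ : r < ρ) (hρ : ρ < 1)
    (hb : ∀ n, ‖b n‖ * ρ ^ n ≤ C) {z : ℂ} (hz : ‖z‖ < r) :
    HasDerivAt (fun y : ℂ => ∑' n : ℕ, b n * y ^ n)
      (∑' n : ℕ, b n * ((n : ℂ) * z ^ (n - 1))) z := by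
  have hρ0 : 0 < ρ := hr.trans hrρ
  set q := r / ρ with hqdef
  have hq0 : 0 ≤ q := div_nonneg hr.le hρ0.le
  have hq1 : q < 1 := (div_lt_one hρ0).2 hrρ
  have hu : Summable (fun n : ℕ => (C/ρ) * ((n:ℝ) * q^(n-1))) :=
    (mySumNQ hq0 hq1).mul_left _
  have hbn : ∀ n, ‖b n‖ ≤ C / ρ ^ n := fun n =>
    (le_div_iff₀ (pow_pos hρ0 n)).2 (hb n)
  apply hasDerivAt_tsum_of_isPreconnected hu isOpen_ball
    (convex_ball (0:ℂ) r).isPreconnected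
    (fun n y _ => (hasDerivAt_pow n y).const_mul (b n))
    ?_ (mem_ball_self hr) ?_ (mem_ball_zero_iff.2 hz)
  · intro n y hy
    have hyr : ‖y‖ ≤ r := (mem_ball_zero_iff.1 hy).le
    have hnorm : ‖b n * ((n:ℂ) * y ^ (n-1))‖ = ‖b n‖ * ((n:ℝ) * ‖y‖ ^ (n-1)) := by
      simp [norm_mul, norm_pow]
    rw [hnorm]
    rcases Nat.eq_zero_or_pos n with rfl | hn
    · simp
    · have h1 : ‖b n‖ * ((n:ℝ) * ‖y‖ ^ (n-1)) ≤ (C / ρ^n) * ((n:ℝ) * r ^ (n-1)) := by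
        apply mul_le_mul (hbn n) ?_ (by positivity) (by positivity)
        exact mul_le_mul_of_nonneg_left (pow_le_pow_left₀ (norm_nonneg y) hyr _) (Nat.cast_nonneg n)
      refine h1.trans (le_of_eq ?_)
      obtain ⟨m, rfl⟩ := Nat.exists_eq_succ_of_ne_zero hn.ne'
      simp only [Nat.succ_sub_one, hqdef, div_pow]
      rw [pow_succ]
      field_simp
  · apply summable_of_ne_finset_zero (s := {0})
    intro n hn
    simp only [Finset.mem_singleton] at hn
    simp [zero_pow hn]

lemma myBound {C ρ t an : ℝ} (hρ0 : 0 < ρ) (ht0 : 0 ≤ t) (han0 : 0 ≤ an) (n : ℕ)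
    (h : an * ρ^n ≤ C) :
    an * ((n:ℝ) * t^(n-1)) ≤ (C/ρ) * ((n:ℝ) * (t/ρ)^(n-1)) := by
  rcases n with _ | m
  · simp
  · have han : an ≤ C / ρ^(m+1) := (le_div_iff₀ (pow_pos hρ0 _)).2 h
    have e : (C/ρ) * (((m+1:ℕ):ℝ) * (t/ρ)^(m+1-1)) = (C/ρ^(m+1)) * (((m+1:ℕ):ℝ) * t^m) := by
      simp only [Nat.add_sub_cancel, div_pow, pow_succ]
      field_simp
    rw [e]
    simp only [Nat.add_sub_cancel]
    have : an * (((m+1:ℕ):ℝ) * t^m) ≤ (C / ρ^(m+1)) * (((m+1:ℕ):ℝ) * t^m) :=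
      mul_le_mul_of_nonneg_right han (by positivity)
    exact this

lemma myIntOfReal {X : Type*} [MeasurableSpace X] {μ : MeasureTheory.Measure X} (f : X → ℝ) :
    ∫ x, ((f x : ℝ) : ℂ) ∂μ = ((∫ x, f x ∂μ : ℝ) : ℂ) := integral_ofReal

theorem omega_preserves_R (α μ : ℝ) (hα : 1 < α) (hμ : -1 < μ)
    (f : ℂ → ℂ) (a : ℕ → ℂ) (ha0 : a 0 = 0) (ha1 : a 1 = 1)
    (hf : DifferentiableOn ℂ f (ball (0 : ℂ) 1))
    (hsum : ∀ z ∈ ball (0 : ℂ) 1, HasSum (fun n : ℕ => a n * z ^ n) (f z))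
    (hre : ∀ z ∈ ball (0 : ℂ) 1, 0 < (deriv f z).re)
    (c : ℕ → ℝ)
    (hc : ∀ n : ℕ, c n =
      (Real.Gamma (1 / (μ + 1) + α + 1) * Real.Gamma ((n : ℝ) / (μ + 1) + 1)) /
        (Real.Gamma ((n : ℝ) / (μ + 1) + α + 1) * Real.Gamma (1 / (μ + 1) + 1)))
    (g : ℂ → ℂ)
    (hg : ∀ z : ℂ, g z = ∑' n : ℕ, (c n : ℂ) * a n * z ^ n) :
    ∀ z ∈ ball (0 : ℂ) 1, 0 < (deriv g z).re := by
  intro z hz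
  rw [mem_ball, dist_zero_right] at hz
  have ht0 : 0 ≤ ‖z‖ := norm_nonneg z
  set r : ℝ := (1 + 3*‖z‖)/4 with hrdef
  set ρ : ℝ := (1 + ‖z‖)/2 with hρdef
  have hzr : ‖z‖ < r := by rw [hrdef]; linarith
  have hr0 : 0 < r := by rw [hrdef]; linarith
  have hrρ : r < ρ := by rw [hrdef, hρdef]; linarith
  have hρ1 : ρ < 1 := by rw [hρdef]; linarith
  have hρ0 : 0 < ρ := hr0.trans hrρ
  -- coefficient bound
  have hρball : (ρ:ℂ) ∈ ball (0:ℂ) 1 := by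
    rw [mem_ball, dist_zero_right, Complex.norm_real, Real.norm_eq_abs, _root_.abs_of_pos hρ0]
    exact hρ1
  have hsm : Summable (fun n => ‖a n * (ρ:ℂ)^n‖) := summable_norm_iff.2 (hsum _ hρball).summable
  set C : ℝ := ∑' n, ‖a n * (ρ:ℂ)^n‖ with hCdef
  have hC0 : 0 ≤ C := tsum_nonneg (fun n => norm_nonneg _)
  have hCa : ∀ n, ‖a n‖ * ρ^n ≤ C := by
    intro n
    have := Summable.le_tsum hsm n (fun j _ => norm_nonneg _)
    rwa [norm_mul, norm_pow, Complex.norm_real, Real.norm_eq_abs, _root_.abs_of_pos hρ0] at this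
  -- Gamma setup
  have hp0 : 0 < μ + 1 := by linarith
  set s : ℝ := 1/(μ+1) with hsdef
  have hs0 : 0 < s := by rw [hsdef]; positivity
  set K : ℝ := Real.Gamma (s+α+1) / (Real.Gamma (s+1) * Real.Gamma α) with hKdef
  have hK0 : 0 < K := div_pos (Real.Gamma_pos_of_pos (by linarith))
    (mul_pos (Real.Gamma_pos_of_pos (by linarith)) (Real.Gamma_pos_of_pos (by linarith)))
  set w : ℝ → ℝ := fun u => K * ((μ+1) * u ^ (μ+1) * (1 - u ^ (μ+1)) ^ (α-1)) with hwdef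
  -- continuity of w on Icc 0 1
  have hrpowcont : ContinuousOn (fun u : ℝ => u ^ (μ+1)) (Icc (0:ℝ) 1) := by
    apply continuousOn_of_forall_continuousAt
    intro x _
    exact Real.continuousAt_rpow_const x (μ+1) (Or.inr hp0.le)
  have hwcont : ContinuousOn w (Icc (0:ℝ) 1) := by
    apply continuousOn_const.mul
    apply ContinuousOn.mul (continuousOn_const.mul hrpowcont)
    exact (continuousOn_const.sub hrpowcont).rpow_const
      (fun x _ => Or.inr (by linarith : (0:ℝ) ≤ α - 1))
  have hwint : IntegrableOn w (Ioc (0:ℝ) 1) :=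
    (hwcont.integrableOn_Icc).mono_set Ioc_subset_Icc_self
  have hwnn : ∀ u ∈ Ioc (0:ℝ) 1, 0 ≤ w u := by
    intro u hu
    have h1 : (0:ℝ) ≤ u ^ (μ+1) := Real.rpow_nonneg hu.1.le _
    have h2 : u ^ (μ+1) ≤ 1 := Real.rpow_le_one hu.1.le hu.2 hp0.le
    have h3 : (0:ℝ) ≤ (1 - u ^ (μ+1)) ^ (α-1) := Real.rpow_nonneg (by linarith) _
    have := mul_nonneg (mul_nonneg hp0.le h1) h3
    exact mul_nonneg hK0.le this
  have hwpos : ∀ u ∈ Ioo (0:ℝ) 1, 0 < w u := by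
    intro u hu
    have h1 : (0:ℝ) < u ^ (μ+1) := Real.rpow_pos_of_pos hu.1 _
    have h2 : u ^ (μ+1) < 1 := Real.rpow_lt_one hu.1.le hu.2 hp0
    have h3 : (0:ℝ) < (1 - u ^ (μ+1)) ^ (α-1) := Real.rpow_pos_of_pos (by linarith) _
    exact mul_pos hK0 (mul_pos (mul_pos hp0 h1) h3)
  have hwpowcont : ∀ m : ℕ, ContinuousOn (fun u => w u * u ^ m) (Icc (0:ℝ) 1) :=
    fun m => hwcont.mul (continuous_pow m).continuousOn
  have hwpowint : ∀ m : ℕ, IntegrableOn (fun u => w u * u ^ m) (Ioc (0:ℝ) 1) :=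
    fun m => ((hwpowcont m).integrableOn_Icc).mono_set Ioc_subset_Icc_self
  -- the integral representation of the coefficients
  have hrep : ∀ n : ℕ, 1 ≤ n → c n = ∫ u in Ioc (0:ℝ) 1, w u * u ^ (n-1) := by
    intro n hn
    have hβ := myBeta (a := (n:ℝ)/(μ+1)+1) (b := α) (by positivity) (by linarith)
    simp only [show (n:ℝ)/(μ+1)+1-1 = (n:ℝ)/(μ+1) from by ring] at hβ
    have hsub := mySubst hp0 (fun v => v ^ ((n:ℝ)/(μ+1)) * (1-v)^(α-1))
    have hpt : ∀ u ∈ Ioc (0:ℝ) 1, w u * u ^ (n-1)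
        = K * ((μ+1) * u^((μ+1)-1) * ((u^(μ+1))^((n:ℝ)/(μ+1)) * (1-u^(μ+1))^(α-1))) := by
      intro u hu
      have hu0 : 0 < u := hu.1
      have e1 : (u^(μ+1))^((n:ℝ)/(μ+1)) = u^(n:ℝ) := by
        rw [← Real.rpow_mul hu0.le]
        congr 1
        field_simp
      have e2 : u ^ (n-1 : ℕ) = u ^ ((n:ℝ)-1) := by
        rw [← Real.rpow_natCast u (n-1)]
        congr 1
        push_cast [Nat.cast_sub hn]
        ring
      have e3 : u^(μ+1) * u^((n:ℝ)-1) = u^((μ+1)-1) * u^(n:ℝ) := by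
        rw [← Real.rpow_add hu0, ← Real.rpow_add hu0]
        congr 1
        ring
      rw [e1, e2]
      simp only [hwdef]
      linear_combination (K * (μ+1) * (1-u^(μ+1))^(α-1)) * e3
    calc c n = K * (Real.Gamma ((n:ℝ)/(μ+1)+1) * Real.Gamma α / Real.Gamma ((n:ℝ)/(μ+1)+1+α)) := by
          rw [hc n, hKdef]
          have h0 : (n:ℝ)/(μ+1)+1+α = (n:ℝ)/(μ+1)+α+1 := by ring
          rw [h0]
          have g1 : Real.Gamma ((n:ℝ)/(μ+1)+α+1) ≠ 0 := (Real.Gamma_pos_of_pos (by positivity)).ne'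
          have g2 : Real.Gamma (s+1) ≠ 0 := (Real.Gamma_pos_of_pos (by linarith)).ne'
          have g3 : Real.Gamma α ≠ 0 := (Real.Gamma_pos_of_pos (by linarith)).ne'
          field_simp
      _ = K * ∫ v in (0:ℝ)..1, v ^ ((n:ℝ)/(μ+1)) * (1-v)^(α-1) := by rw [hβ]
      _ = K * ∫ v in Ioc (0:ℝ) 1, v ^ ((n:ℝ)/(μ+1)) * (1-v)^(α-1) := by
          rw [intervalIntegral.integral_of_le zero_le_one]
      _ = K * ∫ u in Ioc (0:ℝ) 1, (μ+1) * u^((μ+1)-1) * ((u^(μ+1))^((n:ℝ)/(μ+1)) * (1-u^(μ+1))^(α-1)) := by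
          rw [hsub]
      _ = ∫ u in Ioc (0:ℝ) 1, K * ((μ+1) * u^((μ+1)-1) * ((u^(μ+1))^((n:ℝ)/(μ+1)) * (1-u^(μ+1))^(α-1))) := by
          rw [MeasureTheory.integral_const_mul]
      _ = ∫ u in Ioc (0:ℝ) 1, w u * u ^ (n-1) := (setIntegral_congr_fun measurableSet_Ioc hpt).symm
  set Cw : ℝ := ∫ u in Ioc (0:ℝ) 1, w u with hCwdef
  have hCw0 : 0 ≤ Cw := setIntegral_nonneg measurableSet_Ioc hwnn
  have hcb : ∀ n : ℕ, 1 ≤ n → |c n| ≤ Cw := by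
    intro n hn
    have h0 : 0 ≤ c n := by
      rw [hrep n hn]
      exact setIntegral_nonneg measurableSet_Ioc
        (fun u hu => mul_nonneg (hwnn u hu) (pow_nonneg hu.1.le _))
    rw [_root_.abs_of_nonneg h0, hrep n hn, hCwdef]
    apply setIntegral_mono_on (hwpowint (n-1)) hwint measurableSet_Ioc
    intro u hu
    have : u ^ (n-1) ≤ 1 := pow_le_one₀ hu.1.le hu.2
    calc w u * u ^ (n-1) ≤ w u * 1 := mul_le_mul_of_nonneg_left this (hwnn u hu)
      _ = w u := mul_one _
  -- the coefficients of g
  set b : ℕ → ℂ := fun n => (c n : ℂ) * a n with hbdef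
  have hbb : ∀ n, ‖b n‖ * ρ^n ≤ C * (Cw + 1) := by
    intro n
    have hbn : ‖b n‖ = |c n| * ‖a n‖ := by
      rw [hbdef]
      simp [norm_mul, Complex.norm_real]
    rcases Nat.eq_zero_or_pos n with rfl | hn
    · rw [hbn]
      simp [ha0]
      positivity
    · rw [hbn]
      have h1 : |c n| * ‖a n‖ * ρ^n = |c n| * (‖a n‖ * ρ^n) := by ring
      rw [h1]
      have h2 : |c n| * (‖a n‖ * ρ^n) ≤ Cw * C :=
        mul_le_mul (hcb n hn) (hCa n) (by positivity) hCw0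
      nlinarith
  -- derivative of g at z
  have hgD : HasDerivAt g (∑' n, b n * ((n:ℂ) * z^(n-1))) z := by
    have hgeq : g = fun y : ℂ => ∑' n, b n * y^n := funext (fun y => hg y)
    rw [hgeq]
    exact myDeriv b (by positivity) hr0 hrρ hρ1 hbb hzr
  -- derivative of f on the small ball
  have hfd : ∀ y : ℂ, ‖y‖ < r → deriv f y = ∑' n, a n * ((n:ℂ) * y^(n-1)) := by
    intro y hy
    have hr1 : r < 1 := hrρ.trans hρ1
    have hyb : y ∈ ball (0:ℂ) 1 := mem_ball_zero_iff.2 (hy.trans hr1)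
    have hev : (fun x => ∑' n, a n * x^n) =ᶠ[nhds y] f := by
      filter_upwards [isOpen_ball.mem_nhds hyb] with x hx
      exact (hsum x hx).tsum_eq
    rw [← hev.deriv_eq]
    exact (myDeriv a hC0 hr0 hrρ hρ1 hCa hy).deriv
  -- norm bound for z * u
  have hzu : ∀ u : ℝ, u ∈ Ioc (0:ℝ) 1 → ‖z * (u:ℂ)‖ ≤ ‖z‖ := by
    intro u hu
    rw [norm_mul, Complex.norm_real, Real.norm_eq_abs, _root_.abs_of_pos hu.1]
    exact mul_le_of_le_one_right ht0 hu.2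
  have hfd' : ∀ u : ℝ, u ∈ Ioc (0:ℝ) 1 →
      deriv f (z * (u:ℂ)) = ∑' n, a n * ((n:ℂ) * (z*(u:ℂ))^(n-1)) :=
    fun u hu => hfd _ (lt_of_le_of_lt (hzu u hu) hzr)
  -- the integrand family
  set F : ℕ → ℝ → ℂ := fun n u => ((w u : ℝ) : ℂ) * (a n * ((n:ℂ) * (z * (u:ℂ))^(n-1)))
    with hFdef
  have hFnorm : ∀ n, ∀ u ∈ Ioc (0:ℝ) 1, ‖F n u‖ ≤ w u * (‖a n‖ * ((n:ℝ) * ‖z‖^(n-1))) := by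
    intro n u hu
    rw [hFdef]
    simp only [norm_mul, Complex.norm_real, Real.norm_eq_abs, norm_pow, Complex.norm_natCast]
    rw [_root_.abs_of_nonneg (hwnn u hu)]
    apply mul_le_mul_of_nonneg_left _ (hwnn u hu)
    apply mul_le_mul_of_nonneg_left _ (norm_nonneg (a n))
    apply mul_le_mul_of_nonneg_left _ (Nat.cast_nonneg n)
    have h4 : ‖z‖ * |u| ≤ ‖z‖ := by
      rw [_root_.abs_of_pos hu.1]
      exact mul_le_of_le_one_right ht0 hu.2
    exact pow_le_pow_left₀ (by positivity) h4 _
  have hFcont : ∀ n, ContinuousOn (F n) (Ioc (0:ℝ) 1) := by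
    intro n
    rw [hFdef]
    apply ContinuousOn.mul
    · exact Complex.continuous_ofReal.comp_continuousOn (hwcont.mono Ioc_subset_Icc_self)
    · apply Continuous.continuousOn
      exact continuous_const.mul (continuous_const.mul ((continuous_const.mul Complex.continuous_ofReal).pow _))
  have hFint : ∀ n, IntegrableOn (F n) (Ioc (0:ℝ) 1) := by
    intro n
    apply Integrable.mono' (hwint.mul_const (‖a n‖ * ((n:ℝ) * ‖z‖^(n-1))))
      ((hFcont n).aestronglyMeasurable measurableSet_Ioc)
    rw [MeasureTheory.ae_restrict_iff' measurableSet_Ioc]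
    exact Filter.Eventually.of_forall (hFnorm n)
  have hFintnorm : Summable (fun n => ∫ u in Ioc (0:ℝ) 1, ‖F n u‖) := by
    have hq0 : 0 ≤ ‖z‖/ρ := by positivity
    have hq1 : ‖z‖/ρ < 1 := (div_lt_one hρ0).2 (hzr.trans hrρ)
    apply Summable.of_nonneg_of_le
      (fun n => integral_nonneg (fun u => norm_nonneg _))
      (fun n => ?_) (((mySumNQ hq0 hq1).mul_left (C/ρ)).mul_left Cw)
    calc ∫ u in Ioc (0:ℝ) 1, ‖F n u‖
        ≤ ∫ u in Ioc (0:ℝ) 1, w u * (‖a n‖ * ((n:ℝ) * ‖z‖^(n-1))) := by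
          apply setIntegral_mono_on ((hFint n).norm) (hwint.mul_const _) measurableSet_Ioc
          exact hFnorm n
      _ = Cw * (‖a n‖ * ((n:ℝ) * ‖z‖^(n-1))) := by
          rw [MeasureTheory.integral_mul_const]
      _ ≤ Cw * ((C/ρ) * ((n:ℝ) * (‖z‖/ρ)^(n-1))) := by
          apply mul_le_mul_of_nonneg_left _ hCw0
          exact myBound hρ0 ht0 (norm_nonneg _) n (hCa n)
  -- exchange sum and integral
  have hkey : HasSum (fun n => ∫ u in Ioc (0:ℝ) 1, F n u)
      (∫ u in Ioc (0:ℝ) 1, ∑' n, F n u) :=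
    MeasureTheory.hasSum_integral_of_summable_integral_norm hFint hFintnorm
  have htsum_pt : ∀ u ∈ Ioc (0:ℝ) 1,
      (∑' n, F n u) = ((w u : ℝ):ℂ) * deriv f (z * (u:ℂ)) := by
    intro u hu
    rw [hfd' u hu, hFdef]
    exact tsum_mul_left
  have hterm : ∀ n, ∫ u in Ioc (0:ℝ) 1, F n u = b n * ((n:ℂ) * z^(n-1)) := by
    intro n
    rcases Nat.eq_zero_or_pos n with rfl | hn
    · simp [hFdef, ha0, hbdef]
    · have e : ∀ u ∈ Ioc (0:ℝ) 1, F n u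
          = ((w u * u^(n-1) : ℝ):ℂ) * (a n * ((n:ℂ) * z^(n-1))) := by
        intro u hu
        rw [hFdef]
        simp only [mul_pow, Complex.ofReal_mul, Complex.ofReal_pow]
        ring
      rw [setIntegral_congr_fun measurableSet_Ioc e, MeasureTheory.integral_mul_const,
        myIntOfReal, ← hrep n hn, hbdef]
      ring
  have hDg : deriv g z = ∫ u in Ioc (0:ℝ) 1, ((w u : ℝ):ℂ) * deriv f (z*(u:ℂ)) := by
    rw [hgD.deriv, ← setIntegral_congr_fun measurableSet_Ioc htsum_pt,
      ← hkey.tsum_eq]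
    exact (tsum_congr hterm).symm
  -- integrability of the limit integrand
  have hcontD : ContinuousOn (fun u : ℝ => deriv f (z*(u:ℂ))) (Icc (0:ℝ) 1) := by
    have h1 : ContinuousOn (deriv f) (ball (0:ℂ) 1) :=
      ((hf.analyticOnNhd isOpen_ball).deriv).continuousOn
    apply h1.comp (Continuous.continuousOn (continuous_const.mul Complex.continuous_ofReal))
    intro u hu
    rw [Set.mem_Icc] at hu
    show z * (u:ℂ) ∈ ball (0:ℂ) 1
    rw [mem_ball_zero_iff, norm_mul, Complex.norm_real, Real.norm_eq_abs,
      _root_.abs_of_nonneg hu.1]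
    calc ‖z‖ * u ≤ ‖z‖ * 1 := mul_le_mul_of_nonneg_left hu.2 ht0
      _ < 1 := by rw [mul_one]; exact hz
  obtain ⟨B, hB⟩ := isCompact_Icc.exists_bound_of_continuousOn hcontD
  have hlim_int : IntegrableOn (fun u => ((w u : ℝ):ℂ) * deriv f (z*(u:ℂ))) (Ioc (0:ℝ) 1) := by
    apply Integrable.mono' (hwint.mul_const B)
    · apply ContinuousOn.aestronglyMeasurable _ measurableSet_Ioc
      exact (Complex.continuous_ofReal.comp_continuousOn (hwcont.mono Ioc_subset_Icc_self)).mul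
        (hcontD.mono Ioc_subset_Icc_self)
    · rw [MeasureTheory.ae_restrict_iff' measurableSet_Ioc]
      apply Filter.Eventually.of_forall
      intro u hu
      rw [norm_mul, Complex.norm_real, Real.norm_eq_abs, _root_.abs_of_nonneg (hwnn u hu)]
      exact mul_le_mul_of_nonneg_left (hB u (Ioc_subset_Icc_self hu)) (hwnn u hu)
  -- take real parts
  have hre_eq : (deriv g z).re
      = ∫ u in Ioc (0:ℝ) 1, w u * (deriv f (z*(u:ℂ))).re := by
    rw [hDg, ← RCLike.re_to_complex, ← integral_re hlim_int]
    apply setIntegral_congr_fun measurableSet_Ioc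
    intro u _
    simp [RCLike.re_to_complex, Complex.re_ofReal_mul]
  rw [hre_eq]
  -- positivity
  have hnn : 0 ≤ᶠ[ae (volume.restrict (Ioc (0:ℝ) 1))]
      (fun u => w u * (deriv f (z*(u:ℂ))).re) := by
    rw [Filter.EventuallyLE, MeasureTheory.ae_restrict_iff' measurableSet_Ioc]
    apply Filter.Eventually.of_forall
    intro u hu
    have hball : z * (u:ℂ) ∈ ball (0:ℂ) 1 :=
      mem_ball_zero_iff.2 (lt_of_le_of_lt (hzu u hu) hz)
    exact mul_nonneg (hwnn u hu) (hre _ hball).le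
  have hint : IntegrableOn (fun u => w u * (deriv f (z*(u:ℂ))).re) (Ioc (0:ℝ) 1) := by
    have h2 := hlim_int.re
    simp only [RCLike.re_to_complex, Complex.re_ofReal_mul] at h2
    exact h2
  apply (setIntegral_pos_iff_support_of_nonneg_ae hnn hint).2
  have hsup : Ioo (0:ℝ) 1 ⊆
      Function.support (fun u => w u * (deriv f (z*(u:ℂ))).re) ∩ Ioc (0:ℝ) 1 := by
    intro u hu
    have hu' : u ∈ Ioc (0:ℝ) 1 := Ioo_subset_Ioc_self hu
    have hball : z * (u:ℂ) ∈ ball (0:ℂ) 1 :=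
      mem_ball_zero_iff.2 (lt_of_le_of_lt (hzu u hu') hz)
    constructor
    · exact (mul_pos (hwpos u hu) (hre _ hball)).ne'
    · exact hu'
  calc (0:ENNReal) < volume (Ioo (0:ℝ) 1) := by rw [Real.volume_Ioo]; norm_num
    _ ≤ volume (Function.support (fun u => w u * (deriv f (z*(u:ℂ))).re) ∩ Ioc (0:ℝ) 1) :=
      measure_mono hsup
end

section
/- Let α > 1 and μ > −1, and let f(z) = z + ∑_{n≥2} a_n z^n satisfy |a_n| ≤ 2/n for all n ≥ 2. Define Ω f(z) = z + ∑_{n≥2} [Γ(1/(μ+1)+α+1)·Γ(n/(μ+1)+1)] / [Γ(n/(μ+1)+α+1)·Γ(1/(μ+1)+1)] · a_n z^n. Then the power series defining Ω f converges absolutely on the closed unit disk |z| ≤ 1, and Ω f is a bounded analytic function on the open unit disk 𝔻. -/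
/-!
Put `t = n/(μ+1)`. Since `Γ` increases on `[2, ∞)` and `α ≥ 1`,
`Γ(t+α+1) ≥ Γ(t+2) = (t+1) Γ(t+1)`, so the `n`-th coefficient of `Ω` is at most a constant
times `1/(t+1) ≤ (μ+1)/n`. Together with `|aₙ| ≤ 2/n` the coefficients of `Ω f` are
`O(1/n²)`, hence absolutely summable. A power series with absolutely summable coefficients
converges absolutely on the closed disk, is bounded there by the sum of the moduli of its
coefficients, and is holomorphic in the open disk by the Weierstrass M-test.
-/

open Complex Metric

namespace Real

theorem Gamma_add_one_div_Gamma_add_le {t α : ℝ} (ht : 0 ≤ t) (hα : 1 ≤ α) :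
    Gamma (t + 1) / Gamma (t + α + 1) ≤ 1 / (t + 1) := by
  have hmono : Gamma (t + 2) ≤ Gamma (t + α + 1) :=
    Gamma_strictMonoOn_Ici.monotoneOn (by simp only [Set.mem_Ici]; linarith)
      (by simp only [Set.mem_Ici]; linarith) (by linarith)
  have hrec : Gamma (t + 2) = (t + 1) * Gamma (t + 1) := by
    rw [show t + 2 = t + 1 + 1 by ring, Gamma_add_one (by linarith)]
  rw [div_le_div_iff₀ (by positivity) (by linarith)]
  linarith

end Real

section PowerSeries

variable {𝕜 : Type*} [NormedDivisionRing 𝕜] {b : ℕ → 𝕜} {z : 𝕜}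

theorem norm_mul_pow_le_of_norm_le_one (hz : ‖z‖ ≤ 1) (n : ℕ) : ‖b n * z ^ n‖ ≤ ‖b n‖ := by
  rw [norm_mul, norm_pow]
  exact mul_le_of_le_one_right (norm_nonneg _) (pow_le_one₀ (norm_nonneg z) hz)

theorem summable_norm_mul_pow_of_norm_le_one (hb : Summable fun n => ‖b n‖) (hz : ‖z‖ ≤ 1) :
    Summable fun n => ‖b n * z ^ n‖ :=
  hb.of_nonneg_of_le (fun _ => norm_nonneg _) (norm_mul_pow_le_of_norm_le_one hz)

theorem norm_tsum_mul_pow_le_of_norm_le_one (hb : Summable fun n => ‖b n‖) (hz : ‖z‖ ≤ 1) :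
    ‖∑' n, b n * z ^ n‖ ≤ ∑' n, ‖b n‖ :=
  tsum_of_norm_bounded hb.hasSum (norm_mul_pow_le_of_norm_le_one hz)

theorem differentiableOn_tsum_mul_pow {b : ℕ → ℂ} (hb : Summable fun n => ‖b n‖) :
    DifferentiableOn ℂ (fun z => ∑' n, b n * z ^ n) (ball 0 1) :=
  differentiableOn_tsum_of_summable_norm hb (fun _ => (differentiable_const _).mul
    (differentiable_pow _) |>.differentiableOn) isOpen_ball
    fun n _ hw => norm_mul_pow_le_of_norm_le_one (mem_ball_zero_iff.mp hw).le n

end PowerSeries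

section OmegaCoeff

noncomputable def omegaCoeff (α μ : ℝ) (n : ℕ) : ℝ :=
  (Real.Gamma (1 / (μ + 1) + α + 1) * Real.Gamma ((n : ℝ) / (μ + 1) + 1)) /
    (Real.Gamma ((n : ℝ) / (μ + 1) + α + 1) * Real.Gamma (1 / (μ + 1) + 1))

variable {α μ : ℝ}

theorem omegaCoeff_pos (hα : -1 < α) (hμ : -1 < μ) (n : ℕ) : 0 < omegaCoeff α μ n := by
  have : 0 < μ + 1 := by linarith
  have : 0 ≤ (n : ℝ) / (μ + 1) := by positivity
  have : 0 < 1 / (μ + 1) := by positivity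
  unfold omegaCoeff
  exact div_pos
    (mul_pos (Real.Gamma_pos_of_pos (by linarith)) (Real.Gamma_pos_of_pos (by linarith)))
    (mul_pos (Real.Gamma_pos_of_pos (by linarith)) (Real.Gamma_pos_of_pos (by linarith)))

theorem omegaCoeff_le (hα : 1 ≤ α) (hμ : -1 < μ) {n : ℕ} (hn : n ≠ 0) :
    omegaCoeff α μ n ≤
      Real.Gamma (1 / (μ + 1) + α + 1) / Real.Gamma (1 / (μ + 1) + 1) * (μ + 1) / n := by
  have hμ1 : 0 < μ + 1 := by linarith
  have hn0 : (0 : ℝ) < n := by positivity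
  set t := (n : ℝ) / (μ + 1) with ht
  have hK : 0 ≤ Real.Gamma (1 / (μ + 1) + α + 1) / Real.Gamma (1 / (μ + 1) + 1) := by
    have : 0 < 1 / (μ + 1) := by positivity
    exact (div_pos (Real.Gamma_pos_of_pos (by linarith)) (Real.Gamma_pos_of_pos (by linarith))).le
  have hinv : 1 / (t + 1) ≤ (μ + 1) / n := by
    rw [div_le_div_iff₀ (by positivity) hn0, ht]
    field_simp
    linarith
  calc omegaCoeff α μ n
      = Real.Gamma (1 / (μ + 1) + α + 1) / Real.Gamma (1 / (μ + 1) + 1) *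
          (Real.Gamma (t + 1) / Real.Gamma (t + α + 1)) := by
        unfold omegaCoeff; ring
    _ ≤ Real.Gamma (1 / (μ + 1) + α + 1) / Real.Gamma (1 / (μ + 1) + 1) * ((μ + 1) / n) :=
        mul_le_mul_of_nonneg_left
          ((Real.Gamma_add_one_div_Gamma_add_le (by positivity) hα).trans hinv) hK
    _ = _ := by ring

theorem summable_norm_omegaCoeff_mul (hα : 1 ≤ α) (hμ : -1 < μ) {a : ℕ → ℂ} {C : ℝ} {N : ℕ}
    (ha : ∀ n, N ≤ n → ‖a n‖ ≤ C / n) :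
    Summable fun n => ‖(omegaCoeff α μ n : ℂ) * a n‖ := by
  set K := Real.Gamma (1 / (μ + 1) + α + 1) / Real.Gamma (1 / (μ + 1) + 1) * (μ + 1)
  refine Summable.of_norm_bounded_eventually_nat (g := fun n : ℕ => K * C * (1 / (n : ℝ) ^ 2))
    ((Real.summable_one_div_nat_pow.2 one_lt_two).mul_left _) ?_
  filter_upwards [Filter.eventually_ge_atTop (max N 1)] with n hn
  have hn0 : n ≠ 0 := by omega
  have hK : 0 ≤ K / n := (omegaCoeff_pos (by linarith) hμ n).le.trans (omegaCoeff_le hα hμ hn0)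
  calc ‖‖(omegaCoeff α μ n : ℂ) * a n‖‖
      = omegaCoeff α μ n * ‖a n‖ := by
        rw [norm_norm, norm_mul, norm_real, Real.norm_of_nonneg
          (omegaCoeff_pos (by linarith) hμ n).le]
    _ ≤ K / n * (C / n) :=
        mul_le_mul (omegaCoeff_le hα hμ hn0) (ha n (le_of_max_le_left hn)) (norm_nonneg _) hK
    _ = K * C * (1 / (n : ℝ) ^ 2) := by ring

end OmegaCoeff

theorem omega_abs_conv_and_bounded_general (α μ : ℝ) (hα : 1 < α) (hμ : -1 < μ)
    (a : ℕ → ℂ)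
    (ha : ∀ n : ℕ, 2 ≤ n → ‖a n‖ ≤ 2 / n)
    (c : ℕ → ℝ)
    (hc : ∀ n : ℕ, c n =
      (Real.Gamma (1 / (μ + 1) + α + 1) * Real.Gamma ((n : ℝ) / (μ + 1) + 1)) /
        (Real.Gamma ((n : ℝ) / (μ + 1) + α + 1) * Real.Gamma (1 / (μ + 1) + 1)))
    (g : ℂ → ℂ)
    (hg : ∀ z : ℂ, g z = ∑' n : ℕ, (c n : ℂ) * a n * z ^ n) :
    (∀ z : ℂ, ‖z‖ ≤ 1 → Summable (fun n : ℕ => ‖(c n : ℂ) * a n * z ^ n‖)) ∧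
    DifferentiableOn ℂ g (ball (0 : ℂ) 1) ∧
    ∃ M : ℝ, ∀ z ∈ ball (0 : ℂ) 1, ‖g z‖ ≤ M := by
  obtain rfl : c = omegaCoeff α μ := funext hc
  obtain rfl : g = fun z => ∑' n : ℕ, (omegaCoeff α μ n : ℂ) * a n * z ^ n := funext hg
  have hb : Summable fun n => ‖(omegaCoeff α μ n : ℂ) * a n‖ :=
    summable_norm_omegaCoeff_mul hα.le hμ ha
  exact ⟨fun z hz => summable_norm_mul_pow_of_norm_le_one hb hz, differentiableOn_tsum_mul_pow hb,
    _, fun z hz => norm_tsum_mul_pow_le_of_norm_le_one hb (mem_ball_zero_iff.mp hz).le⟩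

theorem omega_abs_conv_and_bounded (α μ : ℝ) (hα : 1 < α) (hμ : -1 < μ)
    (a : ℕ → ℂ) (ha0 : a 0 = 0) (ha1 : a 1 = 1)
    (ha : ∀ n : ℕ, 2 ≤ n → ‖a n‖ ≤ 2 / n)
    (c : ℕ → ℝ)
    (hc : ∀ n : ℕ, c n =
      (Real.Gamma (1 / (μ + 1) + α + 1) * Real.Gamma ((n : ℝ) / (μ + 1) + 1)) /
        (Real.Gamma ((n : ℝ) / (μ + 1) + α + 1) * Real.Gamma (1 / (μ + 1) + 1)))
    (g : ℂ → ℂ)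
    (hg : ∀ z : ℂ, g z = ∑' n : ℕ, (c n : ℂ) * a n * z ^ n) :
    (∀ z : ℂ, ‖z‖ ≤ 1 → Summable (fun n : ℕ => ‖(c n : ℂ) * a n * z ^ n‖)) ∧
    DifferentiableOn ℂ g (ball (0 : ℂ) 1) ∧
    ∃ M : ℝ, ∀ z ∈ ball (0 : ℂ) 1, ‖g z‖ ≤ M :=
  omega_abs_conv_and_bounded_general α μ hα hμ a ha c hc g hg
end
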